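/- For every triple of real numbers (a,b,c) ≠ (0,0,0) and for any two unit vectors ψ₁, ψ₂ in the two-dimensional subspace V₁ := span_ℂ{v₁, w₁} of (ℂ²)^{⊗3}, there exists X ∈ SU(2) such that (X⊗X⊗X)ψ₁ = ψ₂. That is, the group of local symmetric special unitary transformations acts transitively on the unit sphere of V₁. -/

import Mathlib

/-!
For `X = [[p, q], [-q̄, p̄]]` in SU(2) and a one-excitation state
`e = s₀|001⟩ + s₁|010⟩ + s₂|100⟩` with `s₀ + s₁ + s₂ = 0`, the `|000⟩` and `|111⟩` components of
`(X⊗X⊗X) e` cancel, and `X⊗X⊗X` acts on the pair `(e, ē)`, where `ē` is the bit flip of `e`, by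
`e ↦ p e + q̄ ē`, `ē ↦ -q e + p̄ ē`. Since the norm on `span {e, ē}` is the norm of the coordinates
times `‖s‖²`, and SU(2) is transitive on spheres of `ℂ²`, the group acts transitively on the unit
sphere of `span {e, ē}`. The value of `λ` makes the coefficient vectors of `v₁` and of the bit flip
of `w₁` parallel, so `span {v₁, w₁}` lies in such a plane.
-/

open Matrix Complex

noncomputable section

/-- Index type for three qubits: `(ℂ²)^{⊗3} ≅ ℂ⁸` with basis `|jkl⟩`. -/
abbrev Q3 := Fin 2 × Fin 2 × Fin 2

/-- Pauli matrix σx. -/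
def sx : Matrix (Fin 2) (Fin 2) ℂ := !![0, 1; 1, 0]
/-- Pauli matrix σy. -/
def sy : Matrix (Fin 2) (Fin 2) ℂ := !![0, I; -I, 0]
/-- Pauli matrix σz. -/
def sz : Matrix (Fin 2) (Fin 2) ℂ := !![1, 0; 0, -1]

/-- Tensor (Kronecker) product of three 2×2 matrices, as an 8×8 matrix. -/
def tens3 (A B C : Matrix (Fin 2) (Fin 2) ℂ) : Matrix Q3 Q3 ℂ :=
  fun p q => A p.1 q.1 * B p.2.1 q.2.1 * C p.2.2 q.2.2

/-- Computational basis vector `|jkl⟩`. -/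
def ket (j k l : Fin 2) : Q3 → ℂ := fun p => if p = (j, k, l) then 1 else 0

/-- φ₀ = |000⟩. -/
def phi0 : Q3 → ℂ := ket 0 0 0
/-- φ₁ = |100⟩+|010⟩+|001⟩. -/
def phi1 : Q3 → ℂ := ket 1 0 0 + ket 0 1 0 + ket 0 0 1
/-- φ₂ = |110⟩+|011⟩+|101⟩. -/
def phi2 : Q3 → ℂ := ket 1 1 0 + ket 0 1 1 + ket 1 0 1
/-- φ₃ = |111⟩. -/
def phi3 : Q3 → ℂ := ket 1 1 1

/-- λ = 2√(3a²+3b²+3c²+3bc). -/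
def lam (a b c : ℝ) : ℝ := 2 * Real.sqrt (3*a^2 + 3*b^2 + 3*c^2 + 3*b*c)

def x2 (a b c : ℝ) : ℂ := (5/3 : ℂ) * (lam a b c : ℝ) - 6*(b:ℂ) - 2*I*(a:ℂ) - 2*(c:ℂ)
def x3 (a b c : ℝ) : ℂ := -((lam a b c : ℝ) : ℂ)/3 + 6*I*(a:ℂ) - 4*(c:ℂ) + 2*(b:ℂ)
def x5 (a b c : ℝ) : ℂ := -(x2 a b c + x3 a b c)
def x4 (a b c : ℝ) : ℂ := (5/3 : ℂ) * (lam a b c : ℝ) - 6*(c:ℂ) + 2*I*(a:ℂ) - 2*(b:ℂ)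
def x6 (a b c : ℝ) : ℂ := -((lam a b c : ℝ) : ℂ)/3 - 6*I*(a:ℂ) - 4*(b:ℂ) + 2*(c:ℂ)
def x7 (a b c : ℝ) : ℂ := -(x4 a b c + x6 a b c)

/-- v₁ = x₂|001⟩ + x₃|010⟩ + x₅|100⟩. -/
def v1 (a b c : ℝ) : Q3 → ℂ := x2 a b c • ket 0 0 1 + x3 a b c • ket 0 1 0 + x5 a b c • ket 1 0 0
/-- w₁ = x₄|011⟩ + x₆|101⟩ + x₇|110⟩. -/
def w1 (a b c : ℝ) : Q3 → ℂ := x4 a b c • ket 0 1 1 + x6 a b c • ket 1 0 1 + x7 a b c • ket 1 1 0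

def y2 (a b c : ℝ) : ℂ := (5/3 : ℂ) * (lam a b c : ℝ) + 6*(b:ℂ) + 2*I*(a:ℂ) + 2*(c:ℂ)
def y3 (a b c : ℝ) : ℂ := -((lam a b c : ℝ) : ℂ)/3 - 6*I*(a:ℂ) + 4*(c:ℂ) - 2*(b:ℂ)
def y5 (a b c : ℝ) : ℂ := -(y2 a b c + y3 a b c)
def y4 (a b c : ℝ) : ℂ := (5/3 : ℂ) * (lam a b c : ℝ) + 6*(c:ℂ) - 2*I*(a:ℂ) + 2*(b:ℂ)
def y6 (a b c : ℝ) : ℂ := -((lam a b c : ℝ) : ℂ)/3 + 6*I*(a:ℂ) + 4*(b:ℂ) - 2*(c:ℂ)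
def y7 (a b c : ℝ) : ℂ := -(y4 a b c + y6 a b c)

/-- v₂ = y₂|001⟩ + y₃|010⟩ + y₅|100⟩. -/
def v2 (a b c : ℝ) : Q3 → ℂ := y2 a b c • ket 0 0 1 + y3 a b c • ket 0 1 0 + y5 a b c • ket 1 0 0
/-- w₂ = y₄|011⟩ + y₆|101⟩ + y₇|110⟩. -/
def w2 (a b c : ℝ) : Q3 → ℂ := y4 a b c • ket 0 1 1 + y6 a b c • ket 1 0 1 + y7 a b c • ket 1 1 0


open ComplexConjugate

def cayleyKlein (p q : ℂ) : Matrix (Fin 2) (Fin 2) ℂ := !![p, q; -conj q, conj p]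

lemma cayleyKlein_mem_specialUnitaryGroup {p q : ℂ} (h : p * conj p + q * conj q = 1) :
    cayleyKlein p q ∈ specialUnitaryGroup (Fin 2) ℂ := by
  rw [mem_specialUnitaryGroup_iff, mem_unitaryGroup_iff, cayleyKlein, det_fin_two_of]
  refine ⟨?_, by linear_combination h⟩
  ext i j
  fin_cases i <;> fin_cases j <;> simp [mul_apply, Fin.sum_univ_two]
    <;> first | linear_combination h | ring

def oneExcitation : (Fin 3 → ℂ) →ₗ[ℂ] Q3 → ℂ :=
  Fintype.linearCombination ℂ ![ket 0 0 1, ket 0 1 0, ket 1 0 0]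

-- The bit flip of `oneExcitation`: `|001⟩ ↦ |110⟩`, `|010⟩ ↦ |101⟩`, `|100⟩ ↦ |011⟩`.
def twoExcitation : (Fin 3 → ℂ) →ₗ[ℂ] Q3 → ℂ :=
  Fintype.linearCombination ℂ ![ket 1 1 0, ket 1 0 1, ket 0 1 1]

lemma apply_two_eq_neg_of_sum_eq_zero {s : Fin 3 → ℂ} (hs : ∑ i, s i = 0) : s 2 = -(s 0 + s 1) := by
  rw [Fin.sum_univ_three] at hs
  linear_combination hs

-- Not normalised to `p p̄ + q q̄ = 1`, so that once `s 2` is eliminated every coordinate is a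
-- ring identity.
lemma tens3_cayleyKlein_mulVec_oneExcitation (p q : ℂ) {s : Fin 3 → ℂ} (hs : ∑ i, s i = 0) :
    tens3 (cayleyKlein p q) (cayleyKlein p q) (cayleyKlein p q) *ᵥ oneExcitation s =
      (p * conj p + q * conj q) • (p • oneExcitation s + conj q • twoExcitation s) := by
  have h2 := apply_two_eq_neg_of_sum_eq_zero hs
  ext ⟨i, j, k⟩
  fin_cases i <;> fin_cases j <;> fin_cases k <;>
    simp [mulVec, dotProduct, Fintype.sum_prod_type, tens3, cayleyKlein, oneExcitation,
      twoExcitation, Fintype.linearCombination_apply, Fin.sum_univ_three, ket, h2] <;> ring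

lemma tens3_cayleyKlein_mulVec_twoExcitation (p q : ℂ) {s : Fin 3 → ℂ} (hs : ∑ i, s i = 0) :
    tens3 (cayleyKlein p q) (cayleyKlein p q) (cayleyKlein p q) *ᵥ twoExcitation s =
      (p * conj p + q * conj q) • (-q • oneExcitation s + conj p • twoExcitation s) := by
  have h2 := apply_two_eq_neg_of_sum_eq_zero hs
  ext ⟨i, j, k⟩
  fin_cases i <;> fin_cases j <;> fin_cases k <;>
    simp [mulVec, dotProduct, Fintype.sum_prod_type, tens3, cayleyKlein, oneExcitation,
      twoExcitation, Fintype.linearCombination_apply, Fin.sum_univ_three, ket, h2] <;> ring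

lemma sum_normSq_smul_oneExcitation_add_smul_twoExcitation (α β : ℂ) (s : Fin 3 → ℂ) :
    ∑ x, normSq ((α • oneExcitation s + β • twoExcitation s) x) =
      (normSq α + normSq β) * ∑ i, normSq (s i) := by
  simp only [oneExcitation, Fin.isValue, Fintype.linearCombination_apply, Fin.sum_univ_three,
    cons_val_zero, cons_val_one, cons_val, smul_add, twoExcitation, Pi.add_apply, Pi.smul_apply,
    ket, smul_eq_mul, mul_ite, mul_one, mul_zero, Fintype.sum_prod_type, Prod.mk.injEq,
    Fin.sum_univ_two, zero_ne_one, and_false, ↓reduceIte, and_true, zero_add, add_zero, one_ne_zero,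
    map_zero, normSq_mul]
  ring

lemma exists_cayleyKlein_params_of_normSq_add_eq {α β γ δ : ℂ}
    (h : normSq α + normSq β = normSq γ + normSq δ)
    (h0 : normSq α + normSq β ≠ 0) :
    ∃ p q : ℂ, p * conj p + q * conj q = 1 ∧ α * p - β * q = γ ∧ α * conj q + β * conj p = δ := by
  set r := normSq α + normSq β
  have hrαβ : (r : ℂ) = α * conj α + β * conj β := by simp [r, mul_conj]
  have hrγδ : (r : ℂ) = γ * conj γ + δ * conj δ := by simp [h, mul_conj]
  have hr0 : (r : ℂ) ≠ 0 := ofReal_ne_zero.mpr h0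
  refine ⟨(γ * conj α + conj δ * β) / r, (conj δ * α - γ * conj β) / r, ?_, ?_, ?_⟩
  · simp only [map_div₀, map_add, map_sub, map_mul, conj_conj, conj_ofReal]
    field_simp
    linear_combination -(γ * conj γ + δ * conj δ) * hrαβ - ↑r * hrγδ
  · field_simp
    linear_combination -γ * hrαβ
  · simp only [map_div₀, map_add, map_sub, map_mul, conj_conj, conj_ofReal]
    field_simp
    linear_combination -δ * hrαβ

theorem exists_tens3_mulVec_eq_of_mem_span_excitations {s : Fin 3 → ℂ} (hs : ∑ i, s i = 0)
    {ψ1 ψ2 : Q3 → ℂ}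
    (h1 : ψ1 ∈ Submodule.span ℂ {oneExcitation s, twoExcitation s})
    (h2 : ψ2 ∈ Submodule.span ℂ {oneExcitation s, twoExcitation s})
    (n1 : ∑ x, normSq (ψ1 x) = 1) (n2 : ∑ x, normSq (ψ2 x) = 1) :
    ∃ X ∈ specialUnitaryGroup (Fin 2) ℂ, tens3 X X X *ᵥ ψ1 = ψ2 := by
  obtain ⟨α, β, rfl⟩ := Submodule.mem_span_pair.mp h1
  obtain ⟨γ, δ, rfl⟩ := Submodule.mem_span_pair.mp h2
  rw [sum_normSq_smul_oneExcitation_add_smul_twoExcitation] at n1 n2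
  obtain ⟨p, q, hpq, hγ, hδ⟩ := exists_cayleyKlein_params_of_normSq_add_eq
    (mul_right_cancel₀ (right_ne_zero_of_mul_eq_one n1) (n1.trans n2.symm))
    (left_ne_zero_of_mul_eq_one n1)
  refine ⟨cayleyKlein p q, cayleyKlein_mem_specialUnitaryGroup hpq, ?_⟩
  rw [mulVec_add, mulVec_smul, mulVec_smul, tens3_cayleyKlein_mulVec_oneExcitation p q hs,
    tens3_cayleyKlein_mulVec_twoExcitation p q hs, hpq, one_smul, one_smul, ← hγ, ← hδ]
  module

lemma exists_mem_span_singleton_of_cross_eq_zero {K : Type*} [Field K] {u w : Fin 3 → K}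
    (h : u ⨯₃ w = 0) : ∃ s, (s = u ∨ s = w) ∧ u ∈ K ∙ s ∧ w ∈ K ∙ s := by
  by_cases hu : u = 0
  · exact ⟨w, Or.inr rfl, hu ▸ Submodule.zero_mem _, Submodule.mem_span_singleton_self w⟩
  obtain ⟨c, rfl⟩ : ∃ c : K, c • u = w := by
    by_contra! hc
    exact crossProduct_ne_zero_iff_linearIndependent.mpr ((LinearIndependent.pair_iff' hu).mpr hc) h
  exact ⟨u, Or.inl rfl, Submodule.mem_span_singleton_self u,
    Submodule.smul_mem _ c (Submodule.mem_span_singleton_self u)⟩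

lemma span_oneExcitation_twoExcitation_le {u w s : Fin 3 → ℂ} (hu : u ∈ ℂ ∙ s) (hw : w ∈ ℂ ∙ s) :
    Submodule.span ℂ {oneExcitation u, twoExcitation w} ≤
      Submodule.span ℂ {oneExcitation s, twoExcitation s} := by
  obtain ⟨c, rfl⟩ := Submodule.mem_span_singleton.mp hu
  obtain ⟨d, rfl⟩ := Submodule.mem_span_singleton.mp hw
  rw [map_smul, map_smul, Submodule.span_le, Set.insert_subset_iff, Set.singleton_subset_iff]
  exact ⟨Submodule.smul_mem _ c (Submodule.subset_span (by simp)),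
    Submodule.smul_mem _ d (Submodule.subset_span (by simp))⟩

lemma lam_sq (a b c : ℝ) : lam a b c ^ 2 = 12 * (a ^ 2 + b ^ 2 + c ^ 2 + b * c) := by
  rw [lam, mul_pow,
    Real.sq_sqrt (by nlinarith [sq_nonneg (b + c), sq_nonneg a, sq_nonneg b, sq_nonneg c])]
  ring

-- `λ² = 12 (a² + b² + c² + bc)` is exactly what makes these 2×2 minors vanish.
lemma coeffs_v1_cross_coeffs_w1_eq_zero (a b c : ℝ) :
    ![x2 a b c, x3 a b c, x5 a b c] ⨯₃ ![x7 a b c, x6 a b c, x4 a b c] = 0 := by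
  have hlam : ((lam a b c : ℝ) : ℂ) ^ 2 = 12 * ((a : ℂ) ^ 2 + (b : ℂ) ^ 2 + (c : ℂ) ^ 2 + b * c) :=
    mod_cast lam_sq a b c
  simp only [cross_apply, cons_val_zero, cons_val_one, cons_val_two, tail_cons, head_cons,
    cons_eq_zero_iff, zero_empty, and_true]
  unfold x5 x7 x2 x3 x4 x6
  refine ⟨?_, ?_, ?_⟩ <;> linear_combination -hlam - 12 * (a : ℂ) ^ 2 * I_sq

lemma v1_eq_oneExcitation (a b c : ℝ) :
    v1 a b c = oneExcitation ![x2 a b c, x3 a b c, x5 a b c] := by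
  simp [v1, oneExcitation, Fintype.linearCombination_apply, Fin.sum_univ_three]

lemma w1_eq_twoExcitation (a b c : ℝ) :
    w1 a b c = twoExcitation ![x7 a b c, x6 a b c, x4 a b c] := by
  simp only [w1, twoExcitation, Fintype.linearCombination_apply, Fin.sum_univ_three,
    cons_val_zero, cons_val_one, cons_val_two, tail_cons, head_cons]
  abel

theorem statement12_general (a b c : ℝ)
    (ψ1 ψ2 : Q3 → ℂ)
    (h1 : ψ1 ∈ Submodule.span ℂ ({v1 a b c, w1 a b c} : Set (Q3 → ℂ)))
    (h2 : ψ2 ∈ Submodule.span ℂ ({v1 a b c, w1 a b c} : Set (Q3 → ℂ)))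
    (n1 : ∑ p : Q3, Complex.normSq (ψ1 p) = 1)
    (n2 : ∑ p : Q3, Complex.normSq (ψ2 p) = 1) :
    ∃ X ∈ Matrix.specialUnitaryGroup (Fin 2) ℂ,
      (tens3 X X X).mulVec ψ1 = ψ2 := by
  obtain ⟨s, hs, hu, hw⟩ :=
    exists_mem_span_singleton_of_cross_eq_zero (coeffs_v1_cross_coeffs_w1_eq_zero a b c)
  have hsum : ∑ i, s i = 0 := by
    rcases hs with rfl | rfl <;> simp [Fin.sum_univ_three, x5, x7]
  have hle := span_oneExcitation_twoExcitation_le hu hw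
  rw [← v1_eq_oneExcitation, ← w1_eq_twoExcitation] at hle
  exact exists_tens3_mulVec_eq_of_mem_span_excitations hsum (hle h1) (hle h2) n1 n2

/-- for (a,b,c) ≠ (0,0,0), the local symmetric special unitary
transformations X⊗X⊗X, X ∈ SU(2), act transitively on the unit sphere of the
two-dimensional invariant subspace V₁ = span{v₁, w₁}. -/
theorem statement12 (a b c : ℝ) (habc : (a, b, c) ≠ (0, 0, 0))
    (ψ1 ψ2 : Q3 → ℂ)
    (h1 : ψ1 ∈ Submodule.span ℂ ({v1 a b c, w1 a b c} : Set (Q3 → ℂ)))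
    (h2 : ψ2 ∈ Submodule.span ℂ ({v1 a b c, w1 a b c} : Set (Q3 → ℂ)))
    (n1 : ∑ p : Q3, Complex.normSq (ψ1 p) = 1)
    (n2 : ∑ p : Q3, Complex.normSq (ψ2 p) = 1) :
    ∃ X ∈ Matrix.specialUnitaryGroup (Fin 2) ℂ,
      (tens3 X X X).mulVec ψ1 = ψ2 :=
  statement12_general a b c ψ1 ψ2 h1 h2 n1 n2
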